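/- Suppose the velocity potential field σ of a radial force field satisfies assumption (a2): Σ_{i=1}^{3} (∂F_i/∂T_i + ∂G_i/∂X_i) = 0 at all points of the form X = rα, T = tα with r, t > 0. Then the velocity s satisfies the partial differential equation γ_s ∂s/∂t + s ∂γ_s/∂t + ∂γ_s/∂r = 0 at every (r,t) with r, t > 0. -/

import Mathlib

/-!
At a point `(r • α, t • α)` with `‖α‖ = 1` the map `(X, T) ↦ (‖X‖, ‖T‖)` has derivative
`(V, W) ↦ (⟪α, V⟫, ⟪α, W⟫)`, so the `i`-th summand of (a2) is `α i ^ 2 * (∂ₜ(γ s) + ∂ᵣ γ)`.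
Since `∑ α i ^ 2 = 1`, (a2) says `∂ₜ(γ s) + ∂ᵣ γ = 0`; the product rule turns this into the claim.
-/

open EuclideanSpace
open scoped RealInnerProductSpace

section NormDerivative

variable {E : Type*} [NormedAddCommGroup E] [InnerProductSpace ℝ E]

theorem hasFDerivAt_norm {x : E} (hx : x ≠ 0) :
    HasFDerivAt (‖·‖) (‖x‖⁻¹ • innerSL ℝ x) x := by
  have hsq := (hasStrictFDerivAt_norm_sq x).hasFDerivAt.sqrt (by positivity)
  simp only [Real.sqrt_sq (norm_nonneg _)] at hsq
  convert hsq using 1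
  ext v
  simp only [smul_apply, coe_innerSL_apply, smul_eq_mul, one_div, mul_inv_rev, nsmul_eq_mul,
    Nat.cast_ofNat]
  field_simp

theorem fderiv_comp_norm_prod_apply {u : ℝ × ℝ → ℝ} {x y : E} (hx : x ≠ 0) (hy : y ≠ 0)
    (hu : DifferentiableAt ℝ u (‖x‖, ‖y‖)) (v w : E) :
    fderiv ℝ (fun p : E × E => u (‖p.1‖, ‖p.2‖)) (x, y) (v, w) =
      fderiv ℝ u (‖x‖, ‖y‖) (⟪x, v⟫ / ‖x‖, ⟪y, w⟫ / ‖y‖) := by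
  have hnorm : HasFDerivAt (fun p : E × E => (‖p.1‖, ‖p.2‖))
      ((‖x‖⁻¹ • innerSL ℝ x).prodMap (‖y‖⁻¹ • innerSL ℝ y)) (x, y) :=
    (hasFDerivAt_norm hx).prodMap (x, y) (hasFDerivAt_norm hy)
  rw [← Function.comp_def, (hu.hasFDerivAt.comp (x, y) hnorm).fderiv]
  simp [div_eq_inv_mul]

theorem fderiv_comp_norm_prod_smul_apply {u : ℝ × ℝ → ℝ} {α : E} (hα : ‖α‖ = 1) {r t : ℝ}
    (hr : 0 < r) (ht : 0 < t) (hu : DifferentiableAt ℝ u (r, t)) (v w : E) :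
    fderiv ℝ (fun p : E × E => u (‖p.1‖, ‖p.2‖)) (r • α, t • α) (v, w) =
      fderiv ℝ u (r, t) (⟪α, v⟫, ⟪α, w⟫) := by
  have hα0 : α ≠ 0 := norm_ne_zero_iff.mp (by simp [hα])
  have hnorm (c : ℝ) (hc : 0 < c) : ‖c • α‖ = c := by
    rw [norm_smul, hα, mul_one, Real.norm_of_nonneg hc.le]
  rw [← hnorm r hr, ← hnorm t ht] at hu
  rw [fderiv_comp_norm_prod_apply (smul_ne_zero hr.ne' hα0) (smul_ne_zero ht.ne' hα0) hu,
    hnorm r hr, hnorm t ht, real_inner_smul_left, real_inner_smul_left,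
    mul_div_cancel_left₀ _ hr.ne', mul_div_cancel_left₀ _ ht.ne']

end NormDerivative

theorem differentiable_one_div_sqrt_one_sub_sq {E : Type*} [NormedAddCommGroup E]
    [NormedSpace ℝ E] {s : E → ℝ} (hs : Differentiable ℝ s) (hs1 : ∀ p, |s p| < 1) :
    Differentiable ℝ fun p => 1 / √(1 - s p ^ 2) := fun p => by
  have hpos : 0 < 1 - s p ^ 2 := sub_pos.mpr ((sq_lt_one_iff_abs_lt_one _).mpr (hs1 p))
  have hsqrt := Real.sqrt_pos.mpr hpos
  fun_prop (disch := positivity)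

theorem EuclideanSpace.sum_fderiv_radial {ι : Type*} [Fintype ι] [DecidableEq ι]
    {α : EuclideanSpace ℝ ι} (hα : ‖α‖ = 1) {u v : ℝ × ℝ → ℝ} {r t : ℝ} (hr : 0 < r)
    (ht : 0 < t) (hu : DifferentiableAt ℝ u (r, t)) (hv : DifferentiableAt ℝ v (r, t)) :
    ∑ i, (fderiv ℝ (fun p : EuclideanSpace ℝ ι × EuclideanSpace ℝ ι =>
            u (‖p.1‖, ‖p.2‖) * α i) (r • α, t • α) (0, single i 1) +
          fderiv ℝ (fun p : EuclideanSpace ℝ ι × EuclideanSpace ℝ ι =>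
            v (‖p.1‖, ‖p.2‖) * α i) (r • α, t • α) (single i 1, 0)) =
      fderiv ℝ u (r, t) (0, 1) + fderiv ℝ v (r, t) (1, 0) := by
  have hterm (f : ℝ × ℝ → ℝ) (hf : DifferentiableAt ℝ f (r, t)) (i : ι) (x y : ℝ) :
      fderiv ℝ (fun p : EuclideanSpace ℝ ι × EuclideanSpace ℝ ι => f (‖p.1‖, ‖p.2‖) * α i)
          (r • α, t • α) (x • single i 1, y • single i 1) =
        α i ^ 2 * fderiv ℝ f (r, t) (x, y) := by
    rw [fderiv_comp_norm_prod_smul_apply (u := fun q => f q * α i) hα hr ht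
      (hf.mul_const _), fderiv_mul_const hf]
    simp only [real_inner_smul_right, inner_single_right, conj_trivial, one_mul]
    rw [smul_apply, smul_eq_mul, show (x * α i, y * α i) = α i • (x, y) by ext <;> simp [mul_comm],
      map_smul, smul_eq_mul]
    ring
  have hαsq : ∑ i, α i ^ 2 = 1 := by rw [← real_norm_sq_eq, hα, one_pow]
  calc _ = ∑ i, α i ^ 2 * (fderiv ℝ u (r, t) (0, 1) + fderiv ℝ v (r, t) (1, 0)) :=
        Finset.sum_congr rfl fun i _ => by
          rw [mul_add, ← hterm u hu i 0 1, ← hterm v hv i 1 0, zero_smul, one_smul]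
    _ = _ := by rw [← Finset.sum_mul, hαsq, one_mul]

open EuclideanSpace in
/-- If the velocity potential field σ of a radial force field, with e-parts
F_i(X,T) = γ_s(|X|,|T|) α_i s(|X|,|T|) and i-parts G_i(X,T) = γ_s(|X|,|T|) α_i,
satisfies assumption (a2): Σᵢ (∂F_i/∂T_i + ∂G_i/∂X_i) = 0 at all points with
X = rα, T = tα, r, t > 0, then the speed s satisfies
γ_s ∂s/∂t + s ∂γ_s/∂t + ∂γ_s/∂r = 0 for all r, t > 0. -/
theorem radial_velocity_pde
    (α : EuclideanSpace ℝ (Fin 3)) (hα : ‖α‖ = 1)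
    (s : ℝ × ℝ → ℝ) (hs : ContDiff ℝ 1 s) (hs1 : ∀ p, |s p| < 1)
    (γ : ℝ × ℝ → ℝ) (hγ : ∀ p, γ p = 1 / Real.sqrt (1 - s p ^ 2))
    (F G : Fin 3 → EuclideanSpace ℝ (Fin 3) × EuclideanSpace ℝ (Fin 3) → ℝ)
    (hF : ∀ i p, F i p = γ (‖p.1‖, ‖p.2‖) * (α i * s (‖p.1‖, ‖p.2‖)))
    (hG : ∀ i p, G i p = γ (‖p.1‖, ‖p.2‖) * α i)
    (a2 : ∀ r t : ℝ, 0 < r → 0 < t →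
      ∑ i, (fderiv ℝ (F i) (r • α, t • α) (0, single i 1) +
            fderiv ℝ (G i) (r • α, t • α) (single i 1, 0)) = 0) :
    ∀ r t : ℝ, 0 < r → 0 < t →
      γ (r, t) * fderiv ℝ s (r, t) (0, 1) + s (r, t) * fderiv ℝ γ (r, t) (0, 1) +
        fderiv ℝ γ (r, t) (1, 0) = 0 := by
  intro r t hr ht
  have hsd : Differentiable ℝ s := hs.differentiable one_ne_zero
  have hγd : Differentiable ℝ γ := by
    rw [funext hγ]
    exact differentiable_one_div_sqrt_one_sub_sq hsd hs1
  have hF' : F = fun i p => (fun q => γ q * s q) (‖p.1‖, ‖p.2‖) * α i := by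
    ext i p
    rw [hF]
    ring
  have ha2 := a2 r t hr ht
  rw [hF', funext₂ hG] at ha2
  beta_reduce at ha2
  rw [sum_fderiv_radial (u := fun q => γ q * s q) hα hr ht ((hγd _).mul (hsd _)) (hγd _),
    fderiv_fun_mul (hγd _) (hsd _)] at ha2
  simpa [add_comm] using ha2
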